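/- arXiv:1807.04810 — 3 statements merged into one kernel-verified Lean document; each statement's English description precedes it below -/
import Mathlib

section
/- Let Γ be a finite simple graph such that some group of automorphisms of Γ acts transitively on V(Γ), let F be a field, let λ ∈ F, and suppose x : V(Γ) → F is a nonzero vector with A x = λ x, where A is the adjacency matrix of Γ over F. Then |supp(x)| · dim_F {y : V(Γ) → F | A y = λ y} ≥ |V(Γ)|, where supp(x) = {v ∈ V(Γ) | x(v) ≠ 0}. -/
/-- A permutation `g` of the vertex set is an automorphism of the graph `Γ`. -/
def IsGraphAut {V : Type*} (Γ : SimpleGraph V) (g : Equiv.Perm V) : Prop :=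
  ∀ u v : V, Γ.Adj (g u) (g v) ↔ Γ.Adj u v

/-- If a vertex-transitive finite graph has a nonzero `λ`-eigenvector `x` over a field `F`,
then `|supp(x)| · dim_F(λ-eigenspace) ≥ |V(Γ)|`. -/
theorem statement4 {V : Type*} [Fintype V] [DecidableEq V] (Γ : SimpleGraph V)
    [DecidableRel Γ.Adj] {F : Type*} [Field F] (lam : F)
    (htrans : ∀ u v : V, ∃ g : Equiv.Perm V, IsGraphAut Γ g ∧ g u = v)
    (x : V → F) (hx : x ≠ 0)
    (hev : (Γ.adjMatrix F).mulVec x = lam • x) :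
    Fintype.card V ≤
      {v : V | x v ≠ 0}.ncard *
        Module.finrank F
          (LinearMap.ker (Matrix.toLin' (Γ.adjMatrix F) - lam • LinearMap.id)) := by
  classical
  set K := LinearMap.ker (Matrix.toLin' (Γ.adjMatrix F) - lam • LinearMap.id) with hKdef
  have hmemK : ∀ z : V → F, (Γ.adjMatrix F).mulVec z = lam • z → z ∈ K := by
    intro z hz
    simp only [hKdef, LinearMap.mem_ker, LinearMap.sub_apply, Matrix.toLin'_apply,
      LinearMap.smul_apply, LinearMap.id_apply, sub_eq_zero]
    exact hz
  -- translates of x along automorphisms are eigenvectors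
  have htrans' : ∀ g : Equiv.Perm V, IsGraphAut Γ g →
      (Γ.adjMatrix F).mulVec (x ∘ g) = lam • (x ∘ g) := by
    intro g hg
    funext v
    have h1 : (Γ.adjMatrix F).mulVec x (g v) = lam * x (g v) := by rw [hev]; rfl
    have h2 : ∑ u ∈ Γ.neighborFinset (g v), x u = lam * x (g v) := by
      rwa [SimpleGraph.adjMatrix_mulVec_apply] at h1
    have h3 : ∑ u ∈ Γ.neighborFinset v, x (g u) = ∑ u ∈ Γ.neighborFinset (g v), x u := by
      apply Finset.sum_bij (fun u _ => g u)
      · intro a ha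
        rw [SimpleGraph.mem_neighborFinset] at *
        exact (hg v a).mpr ha
      · intro a _ c _ h; exact g.injective h
      · intro c hc
        refine ⟨g.symm c, ?_, by simp⟩
        rw [SimpleGraph.mem_neighborFinset] at *
        have := (hg v (g.symm c)).mp
        simpa using this (by simpa using hc)
      · intros; rfl
    have h4 : (Γ.adjMatrix F).mulVec (x ∘ g) v = ∑ u ∈ Γ.neighborFinset v, x (g u) := by
      rw [SimpleGraph.adjMatrix_mulVec_apply]; rfl
    rw [h4, h3, h2]; rfl
  obtain ⟨u0, hu0⟩ : ∃ u0, x u0 ≠ 0 := by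
    by_contra h; push_neg at h; exact hx (funext h)
  choose g hgaut hgv using fun v => htrans v u0
  set y : V → (V → F) := fun v => x ∘ (g v) with hy
  have hyK : ∀ v, y v ∈ K := fun v => hmemK _ (htrans' _ (hgaut v))
  have hyv : ∀ v, y v v ≠ 0 := fun v => by
    simpa [hy, hgv v] using hu0
  obtain ⟨b, hbs, hb_span, hb_li⟩ := exists_linearIndependent F (Set.range y)
  have hfin : b.Finite := hb_li.setFinite
  have hfint : Fintype b := hfin.fintype
  -- every vertex is in the support of some element of b
  have hcov : ∀ v : V, ∃ z ∈ b, z v ≠ 0 := by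
    intro v
    by_contra h
    push_neg at h
    have hmem : y v ∈ Submodule.span F b := by
      rw [hb_span]; exact Submodule.subset_span ⟨v, rfl⟩
    have hle : Submodule.span F b ≤ LinearMap.ker (LinearMap.proj v : (V → F) →ₗ[F] F) := by
      rw [Submodule.span_le]
      intro z hz
      simpa [LinearMap.mem_ker] using h z hz
    exact hyv v (by simpa [LinearMap.mem_ker] using hle hmem)
  -- card of b bounded by finrank K
  have hbK : b ⊆ (K : Set (V → F)) := fun z hz => by
    obtain ⟨v, rfl⟩ := hbs hz; exact hyK v
  have hcard_b : hfin.toFinset.card ≤ Module.finrank F K := by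
    have h1 : Module.finrank F (Submodule.span F b) = b.toFinset.card :=
      finrank_span_set_eq_card hb_li
    have h2 : Submodule.span F b ≤ K := Submodule.span_le.mpr hbK
    have h3 : Module.finrank F (Submodule.span F b) ≤ Module.finrank F K :=
      Submodule.finrank_mono h2
    have h4 : b.toFinset = hfin.toFinset := by ext z; simp
    rw [h1, h4] at h3
    exact h3
  -- supports of translates have the same card
  have hsuppcard : ∀ gp : Equiv.Perm V,
      (Finset.univ.filter fun v => x (gp v) ≠ 0).card
        = (Finset.univ.filter fun v => x v ≠ 0).card := by
    intro gp
    apply Finset.card_bij (fun v _ => gp v)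
    · intro a ha; simp only [Finset.mem_filter, Finset.mem_univ, true_and] at *; exact ha
    · intro a _ c _ h; exact gp.injective h
    · intro c hc
      refine ⟨gp.symm c, ?_, by simp⟩
      simp only [Finset.mem_filter, Finset.mem_univ, true_and] at *
      simpa using hc
  set sc : ℕ := (Finset.univ.filter fun v => x v ≠ 0).card with hsc
  have hcover : (Finset.univ : Finset V) ⊆
      hfin.toFinset.biUnion (fun z => Finset.univ.filter fun v => z v ≠ 0) := by
    intro v _
    obtain ⟨z, hz, hzv⟩ := hcov v
    exact Finset.mem_biUnion.mpr ⟨z, hfin.mem_toFinset.mpr hz, by simp [hzv]⟩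
  have hmain : Fintype.card V ≤ hfin.toFinset.card * sc := by
    calc Fintype.card V
        = (Finset.univ : Finset V).card := (Finset.card_univ).symm
      _ ≤ (hfin.toFinset.biUnion (fun z => Finset.univ.filter fun v => z v ≠ 0)).card :=
          Finset.card_le_card hcover
      _ ≤ ∑ z ∈ hfin.toFinset, (Finset.univ.filter fun v => z v ≠ 0).card :=
          Finset.card_biUnion_le
      _ = ∑ _z ∈ hfin.toFinset, sc := by
          apply Finset.sum_congr rfl
          intro z hz
          obtain ⟨v, rfl⟩ := hbs (hfin.mem_toFinset.mp hz)
          exact hsuppcard (g v)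
      _ = hfin.toFinset.card * sc := by rw [Finset.sum_const, smul_eq_mul]
  have hsc_ncard : {v : V | x v ≠ 0}.ncard = sc := by
    rw [hsc]
    rw [Set.ncard_eq_toFinset_card' {v : V | x v ≠ 0}]
    congr 1
    ext v
    simp
  calc Fintype.card V ≤ hfin.toFinset.card * sc := hmain
    _ ≤ Module.finrank F K * sc := Nat.mul_le_mul_right _ hcard_b
    _ = {v : V | x v ≠ 0}.ncard * Module.finrank F K := by rw [hsc_ncard, Nat.mul_comm]
end

section
/- The Möbius–Kantor graph MK is a connected 3-regular simple graph on 16 vertices, and there exist subgroups A ≤ B ≤ Aut(MK) such that B acts sharply transitively on the set of 2-arcs of MK and A acts sharply transitively on the set of arcs of MK (so |B| = 96 and |A| = 48). -/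
/-!
`MK` is the Cayley graph of `R` for left multiplication by the involutions `a, b, c` (the identity
of `R` is the zero tuple `0`). Hence every right translation `x ↦ x · r` is an automorphism of
`MK`, and so is every automorphism `σ` of `R` permuting `{a, b, c}`; these `σ` form a copy of
`S₃ ≅ D₃`. The maps `x ↦ σ(x) · r` form a group `B` carrying the 2-arc `(a, 0, b)` to any 2-arc
`(t·v, v, t'·v)`, and only the identity of `B` fixes it: fixing `0` forces `r = 0`, and an
automorphism of `R` fixing `a` and `b` fixes `c` too. Letting `σ` range over the rotations only
gives the subgroup `A`, regular on arcs. The orders are then the numbers of 2-arcs and arcs,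
`16 · 3 · 2` and `16 · 3`.
-/

/-- The underlying set of the group `R`: quadruples over `F₂`. -/
abbrev RSet := ZMod 2 × ZMod 2 × ZMod 2 × ZMod 2

/-- The multiplication of the group `R` of order 16:
`(α₁,β₁,γ₁,δ₁)·(α₂,β₂,γ₂,δ₂) = (α₁+α₂, β₁+β₂, γ₁+γ₂, δ₁+δ₂+β₁α₂+γ₁β₂+γ₁α₂)`. -/
def rmul (p q : RSet) : RSet :=
  (p.1 + q.1, p.2.1 + q.2.1, p.2.2.1 + q.2.2.1,
   p.2.2.2 + q.2.2.2 + p.2.1 * q.1 + p.2.2.1 * q.2.1 + p.2.2.1 * q.1)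

def aR : RSet := (1, 0, 0, 0)
def bR : RSet := (0, 1, 0, 0)
def cR : RSet := (0, 0, 1, 0)

lemma rmul_aa : ∀ g : RSet, rmul aR (rmul aR g) = g := by decide
lemma rmul_bb : ∀ g : RSet, rmul bR (rmul bR g) = g := by decide
lemma rmul_cc : ∀ g : RSet, rmul cR (rmul cR g) = g := by decide

/-- The Möbius–Kantor graph: vertex set `R`, with distinct `g, h` adjacent
iff `h = sg` for some `s ∈ {a, b, c}`. -/
def MK : SimpleGraph RSet where
  Adj g h := g ≠ h ∧ (h = rmul aR g ∨ h = rmul bR g ∨ h = rmul cR g)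
  symm := by
    constructor
    rintro g h ⟨hne, h1 | h1 | h1⟩
    · exact ⟨hne.symm, Or.inl (by rw [h1, rmul_aa])⟩
    · exact ⟨hne.symm, Or.inr (Or.inl (by rw [h1, rmul_bb]))⟩
    · exact ⟨hne.symm, Or.inr (Or.inr (by rw [h1, rmul_cc]))⟩
  loopless := ⟨fun g hg => hg.1 rfl⟩

/-- `G` acts sharply transitively (transitively and freely) on the arcs of `Γ`. -/
def SharplyArcTransitiveOn {V : Type*} (Γ : SimpleGraph V)
    (G : Subgroup (Equiv.Perm V)) : Prop :=
  ∀ u v u' v' : V, Γ.Adj u v → Γ.Adj u' v' →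
    ∃! g : G, (g : Equiv.Perm V) u = u' ∧ (g : Equiv.Perm V) v = v'

/-- `G` acts sharply transitively (transitively and freely) on the 2-arcs of `Γ`. -/
def SharplyTwoArcTransitiveOn {V : Type*} (Γ : SimpleGraph V)
    (G : Subgroup (Equiv.Perm V)) : Prop :=
  ∀ u v w u' v' w' : V, Γ.Adj u v → Γ.Adj v w → u ≠ w →
    Γ.Adj u' v' → Γ.Adj v' w' → u' ≠ w' →
      ∃! g : G, (g : Equiv.Perm V) u = u' ∧ (g : Equiv.Perm V) v = v' ∧
        (g : Equiv.Perm V) w = w'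

section SharplyTransitive

variable {G α : Type*} [Group G] [MulAction G α] {P : α → Prop} {x₀ : α}

theorem existsUnique_smul_eq_of_base (hreach : ∀ x, P x → ∃ g : G, g • x₀ = x)
    (hfree : ∀ g : G, g • x₀ = x₀ → g = 1) {x y : α} (hx : P x) (hy : P y) :
    ∃! g : G, g • x = y := by
  obtain ⟨g, rfl⟩ := hreach x hx
  obtain ⟨h, rfl⟩ := hreach y hy
  refine ⟨h * g⁻¹, by simp only [smul_smul, inv_mul_cancel_right],
    fun k (hk : k • g • x₀ = _) => ?_⟩
  have hfix : (h⁻¹ * k * g) • x₀ = x₀ := by rw [mul_smul, mul_smul, hk, inv_smul_smul]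
  have hkg : h = k * g := by rw [← inv_mul_eq_one, ← mul_assoc, hfree _ hfix]
  rw [eq_mul_inv_iff_mul_eq, hkg]

theorem nat_card_eq_of_existsUnique (hmem : ∀ g : G, P (g • x₀)) (hx₀ : P x₀)
    (h : ∀ x y, P x → P y → ∃! g : G, g • x = y) : Nat.card G = Nat.card {x // P x} := by
  refine Nat.card_congr (Equiv.ofBijective (fun g => ⟨g • x₀, hmem g⟩) ⟨?_, ?_⟩)
  · intro g g' hgg'
    exact (h x₀ (g • x₀) hx₀ (hmem g)).unique rfl (congrArg Subtype.val hgg').symm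
  · rintro ⟨y, hy⟩
    obtain ⟨g, hg, -⟩ := h x₀ y hx₀ hy
    exact ⟨g, Subtype.ext hg⟩

end SharplyTransitive

def Subgroup.ofSubmonoidOfFinite {G : Type*} [Group G] [Finite G] (S : Submonoid G) :
    Subgroup G where
  toSubmonoid := S
  inv_mem' {g} hg := Submonoid.powers_le.mpr hg <|
    (isOfFinOrder_of_finite g).mem_powers_iff_mem_zpowers.mpr
      (inv_mem (Subgroup.mem_zpowers g))

section Arcs

variable {V : Type*} (Γ : SimpleGraph V)

def IsArc (x : V × V) : Prop := Γ.Adj x.1 x.2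

def IsTwoArc (x : V × V × V) : Prop := Γ.Adj x.1 x.2.1 ∧ Γ.Adj x.2.1 x.2.2 ∧ x.1 ≠ x.2.2

instance [DecidableRel Γ.Adj] : DecidablePred (IsArc Γ) :=
  fun x => inferInstanceAs (Decidable (Γ.Adj x.1 x.2))

instance [DecidableEq V] [DecidableRel Γ.Adj] : DecidablePred (IsTwoArc Γ) :=
  fun x => inferInstanceAs <| Decidable (Γ.Adj x.1 x.2.1 ∧ Γ.Adj x.2.1 x.2.2 ∧ x.1 ≠ x.2.2)

variable {Γ} {G : Subgroup (Equiv.Perm V)}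

theorem sharplyArcTransitiveOn_iff :
    SharplyArcTransitiveOn Γ G ↔
      ∀ x y, IsArc Γ x → IsArc Γ y → ∃! g : G, g • x = y := by
  simp [SharplyArcTransitiveOn, IsArc, Prod.forall, Subgroup.smul_def, Equiv.Perm.smul_def]

theorem sharplyTwoArcTransitiveOn_iff :
    SharplyTwoArcTransitiveOn Γ G ↔
      ∀ x y, IsTwoArc Γ x → IsTwoArc Γ y → ∃! g : G, g • x = y := by
  simp [SharplyTwoArcTransitiveOn, IsTwoArc, Prod.forall, Subgroup.smul_def, Equiv.Perm.smul_def]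

theorem IsArc.smul (haut : ∀ g ∈ G, IsGraphAut Γ g) {x : V × V} (hx : IsArc Γ x) (g : G) :
    IsArc Γ (g • x) :=
  (haut g g.2 _ _).mpr hx

theorem IsTwoArc.smul (haut : ∀ g ∈ G, IsGraphAut Γ g) {x : V × V × V} (hx : IsTwoArc Γ x)
    (g : G) : IsTwoArc Γ (g • x) :=
  ⟨(haut g g.2 _ _).mpr hx.1, (haut g g.2 _ _).mpr hx.2.1, fun h => hx.2.2 (g.1.injective h)⟩

end Arcs

instance : DecidableRel MK.Adj := fun g h =>
  inferInstanceAs (Decidable (g ≠ h ∧ (h = rmul aR g ∨ h = rmul bR g ∨ h = rmul cR g)))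

def gens : Finset RSet := {aR, bR, cR}

lemma MK_adj_iff : ∀ u v : RSet, MK.Adj u v ↔ ∃ t ∈ gens, v = rmul t u := by decide

lemma rmul_assoc (x y z : RSet) : rmul (rmul x y) z = rmul x (rmul y z) := by
  refine Prod.ext ?_ (Prod.ext ?_ (Prod.ext ?_ ?_)) <;> simp only [rmul] <;> ring

lemma zero_rmul (x : RSet) : rmul 0 x = x := by simp [rmul]

lemma rmul_zero (x : RSet) : rmul x 0 = x := by simp [rmul]

lemma rmul_right_cancel : ∀ r x y : RSet, rmul x r = rmul y r → x = y := by decide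

/-- The automorphism of `R` cycling `a ↦ b ↦ c ↦ a`; the quadratic term in the last coordinate
is what makes the coordinate permutation of `F₂³` lift to `R`. -/
def rot (p : RSet) : RSet := (p.2.2.1, p.1, p.2.1, p.2.2.2 + p.2.2.1 * p.1 + p.2.2.1 * p.2.1)

/-- The automorphism of `R` swapping `a` and `b` and fixing `c`. -/
def swapAB (p : RSet) : RSet := (p.2.1, p.1, p.2.2.1, p.2.2.2 + p.1 * p.2.1)

/-- `S₃ ≅ D₃` acting on `R` by the automorphisms permuting `{a, b, c}`, with `r 1` acting as
`rot` and `sr 0` as `swapAB`. -/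
def genAut : DihedralGroup 3 → RSet → RSet
  | .r i => rot^[i.val]
  | .sr i => swapAB ∘ rot^[i.val]

open DihedralGroup

lemma genAut_mul : ∀ (d e : DihedralGroup 3) (x : RSet),
    genAut (d * e) x = genAut d (genAut e x) := by decide

lemma genAut_one : ∀ x : RSet, genAut 1 x = x := by decide

lemma genAut_rmul : ∀ (d : DihedralGroup 3) (x y : RSet),
    genAut d (rmul x y) = rmul (genAut d x) (genAut d y) := by decide

lemma genAut_zero : ∀ d : DihedralGroup 3, genAut d 0 = 0 := by decide

lemma genAut_mem_gens : ∀ (d : DihedralGroup 3), ∀ t ∈ gens, genAut d t ∈ gens := by decide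

lemma exists_genAut_eq : ∀ t ∈ gens, ∀ t' ∈ gens, t ≠ t' →
    ∃ d : DihedralGroup 3, genAut d aR = t ∧ genAut d bR = t' := by decide

lemma eq_one_of_genAut_eq_self : ∀ d : DihedralGroup 3, genAut d aR = aR → genAut d bR = bR →
    d = 1 := by decide

lemma exists_genAut_r_eq : ∀ t ∈ gens, ∃ i : ZMod 3, genAut (r i) aR = t := by decide

lemma eq_zero_of_genAut_r_eq_self : ∀ i : ZMod 3, genAut (r i) aR = aR → i = 0 := by decide

lemma genAut_injective (d : DihedralGroup 3) : Function.Injective (genAut d) := fun x y h => by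
  rw [← genAut_one x, ← genAut_one y, ← inv_mul_cancel d, genAut_mul, genAut_mul, h]

lemma affine_injective (d : DihedralGroup 3) (r : RSet) :
    Function.Injective fun x => rmul (genAut d x) r :=
  fun _ _ h => genAut_injective d (rmul_right_cancel r _ _ h)

noncomputable def affinePerm (d : DihedralGroup 3) (r : RSet) : Equiv.Perm RSet :=
  Equiv.ofBijective (fun x => rmul (genAut d x) r)
    (Finite.injective_iff_bijective.mp (affine_injective d r))

@[simp]
lemma affinePerm_apply (d : DihedralGroup 3) (r x : RSet) :
    affinePerm d r x = rmul (genAut d x) r := rfl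

lemma affinePerm_mul (d e : DihedralGroup 3) (r q : RSet) :
    affinePerm d r * affinePerm e q = affinePerm (d * e) (rmul (genAut d q) r) :=
  Equiv.ext fun x => by simp [genAut_rmul, genAut_mul, rmul_assoc]

lemma affinePerm_one : affinePerm 1 0 = 1 :=
  Equiv.ext fun x => by simp [genAut_one, rmul_zero]

noncomputable def affineSubgroup (K : Submonoid (DihedralGroup 3)) :
    Subgroup (Equiv.Perm RSet) :=
  Subgroup.ofSubmonoidOfFinite
    { carrier := {g | ∃ d ∈ K, ∃ r, affinePerm d r = g}
      one_mem' := ⟨1, K.one_mem, 0, affinePerm_one⟩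
      mul_mem' := by
        rintro _ _ ⟨d, hd, r, rfl⟩ ⟨e, he, q, rfl⟩
        exact ⟨d * e, K.mul_mem hd he, _, (affinePerm_mul d e r q).symm⟩ }

lemma affineSubgroup_mono {K L : Submonoid (DihedralGroup 3)} (h : K ≤ L) :
    affineSubgroup K ≤ affineSubgroup L := by
  rintro _ ⟨d, hd, r, rfl⟩
  exact ⟨d, h hd, r, rfl⟩

lemma MK_adj_affinePerm {u v : RSet} (h : MK.Adj u v) (d : DihedralGroup 3) (r : RSet) :
    MK.Adj (affinePerm d r u) (affinePerm d r v) := by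
  obtain ⟨t, ht, rfl⟩ := (MK_adj_iff u v).mp h
  refine (MK_adj_iff _ _).mpr ⟨genAut d t, genAut_mem_gens d t ht, ?_⟩
  simp [genAut_rmul, rmul_assoc]

lemma isGraphAut_of_mem_affineSubgroup {K : Submonoid (DihedralGroup 3)} {g : Equiv.Perm RSet}
    (hg : g ∈ affineSubgroup K) : IsGraphAut MK g := by
  have hmap : ∀ g ∈ affineSubgroup K, ∀ u v, MK.Adj u v → MK.Adj (g u) (g v) := by
    rintro _ ⟨d, -, r, rfl⟩ u v h
    exact MK_adj_affinePerm h d r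
  refine fun u v => ⟨fun h => ?_, hmap g hg u v⟩
  simpa using hmap g⁻¹ (inv_mem hg) _ _ h

lemma exists_eq_genAut_of_mem_affineSubgroup {K : Submonoid (DihedralGroup 3)}
    {g : Equiv.Perm RSet} (hg : g ∈ affineSubgroup K) (h0 : g 0 = 0) :
    ∃ d ∈ K, ∀ x, g x = genAut d x := by
  obtain ⟨d, hd, r, rfl⟩ := hg
  obtain rfl : r = 0 := by simpa [genAut_zero, zero_rmul] using h0
  exact ⟨d, hd, fun x => by simp [rmul_zero]⟩

abbrev twoArcBase : RSet × RSet × RSet := (aR, 0, bR)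

abbrev arcBase : RSet × RSet := (0, aR)

lemma isTwoArc_twoArcBase : IsTwoArc MK twoArcBase := by decide

lemma isArc_arcBase : IsArc MK arcBase := by decide

lemma exists_smul_eq_of_isTwoArc {x : RSet × RSet × RSet} (hx : IsTwoArc MK x) :
    ∃ g : affineSubgroup ⊤, g • twoArcBase = x := by
  obtain ⟨u, v, w⟩ := x
  obtain ⟨huv, hvw, huw⟩ := hx
  obtain ⟨t, ht, rfl⟩ := (MK_adj_iff v u).mp huv.symm
  obtain ⟨t', ht', rfl⟩ := (MK_adj_iff v w).mp hvw
  obtain ⟨d, hda, hdb⟩ := exists_genAut_eq t ht t' ht' (fun h => huw (by rw [h]))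
  refine ⟨⟨affinePerm d v, d, trivial, v, rfl⟩, ?_⟩
  simp [Subgroup.smul_def, hda, hdb, genAut_zero, zero_rmul]

lemma eq_one_of_smul_twoArcBase (g : affineSubgroup ⊤) (h : g • twoArcBase = twoArcBase) :
    g = 1 := by
  simp only [Subgroup.smul_def, Prod.smul_mk, Equiv.Perm.smul_def, Prod.mk.injEq] at h
  obtain ⟨ha, h0, hb⟩ := h
  obtain ⟨d, -, hd⟩ := exists_eq_genAut_of_mem_affineSubgroup g.2 h0
  obtain rfl := eq_one_of_genAut_eq_self d (by rw [← hd, ha]) (by rw [← hd, hb])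
  exact Subtype.ext (Equiv.ext fun x => by simp [hd, genAut_one])

abbrev rotations : Submonoid (DihedralGroup 3) := Submonoid.powers (r 1)

lemma exists_smul_eq_of_isArc {x : RSet × RSet} (hx : IsArc MK x) :
    ∃ g : affineSubgroup rotations, g • arcBase = x := by
  obtain ⟨u, v⟩ := x
  obtain ⟨t, ht, rfl⟩ := (MK_adj_iff u v).mp hx
  obtain ⟨i, hi⟩ := exists_genAut_r_eq t ht
  have hrot : r i ∈ rotations :=
    ⟨i.val, show r 1 ^ i.val = r i by rw [r_one_pow, ZMod.natCast_zmod_val]⟩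
  refine ⟨⟨affinePerm (r i) u, r i, hrot, u, rfl⟩, ?_⟩
  simp [Subgroup.smul_def, hi, genAut_zero, zero_rmul]

lemma eq_one_of_smul_arcBase (g : affineSubgroup rotations) (h : g • arcBase = arcBase) :
    g = 1 := by
  simp only [Subgroup.smul_def, Prod.smul_mk, Equiv.Perm.smul_def, Prod.mk.injEq] at h
  obtain ⟨h0, ha⟩ := h
  obtain ⟨_, ⟨n, rfl⟩, hd⟩ := exists_eq_genAut_of_mem_affineSubgroup g.2 h0
  simp only [r_one_pow] at hd
  have hn := eq_zero_of_genAut_r_eq_self n (by rw [← hd, ha])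
  exact Subtype.ext (Equiv.ext fun x => by simp [hd, hn, genAut_one])

lemma MK_connected : MK.Connected :=
  MK.connected_iff_exists_forall_reachable.mpr ⟨0, by decide⟩

lemma MK_isRegularOfDegree : MK.IsRegularOfDegree 3 := by
  unfold SimpleGraph.IsRegularOfDegree
  decide

lemma card_arcs : Nat.card {x // IsArc MK x} = 48 := by
  rw [Nat.card_eq_fintype_card]
  decide

lemma card_twoArcs : Nat.card {x // IsTwoArc MK x} = 96 := by
  rw [Nat.card_eq_fintype_card]
  decide +kernel

/-- The Möbius–Kantor graph is a connected cubic graph on 16 vertices admitting a group of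
automorphisms `B` sharply transitive on 2-arcs with a subgroup `A` sharply transitive
on arcs (so `|B| = 96` and `|A| = 48`). -/
theorem statement6 :
    MK.Connected ∧ (∀ v : RSet, Nat.card (MK.neighborSet v) = 3) ∧
    Nat.card RSet = 16 ∧
    ∃ A B : Subgroup (Equiv.Perm RSet), A ≤ B ∧
      (∀ g ∈ B, IsGraphAut MK g) ∧
      SharplyTwoArcTransitiveOn MK B ∧ SharplyArcTransitiveOn MK A ∧
      Nat.card B = 96 ∧ Nat.card A = 48 := by
  have hB : ∀ x y, IsTwoArc MK x → IsTwoArc MK y → ∃! g : affineSubgroup ⊤, g • x = y :=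
    fun _ _ => existsUnique_smul_eq_of_base (fun _ => exists_smul_eq_of_isTwoArc)
      eq_one_of_smul_twoArcBase
  have hA : ∀ x y, IsArc MK x → IsArc MK y → ∃! g : affineSubgroup rotations, g • x = y :=
    fun _ _ => existsUnique_smul_eq_of_base (fun _ => exists_smul_eq_of_isArc)
      eq_one_of_smul_arcBase
  have hautB : ∀ g ∈ affineSubgroup ⊤, IsGraphAut MK g :=
    fun _ => isGraphAut_of_mem_affineSubgroup
  have hautA : ∀ g ∈ affineSubgroup rotations, IsGraphAut MK g :=
    fun _ => isGraphAut_of_mem_affineSubgroup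
  refine ⟨MK_connected, fun v => ?_, by simp, _, _, affineSubgroup_mono le_top, hautB,
    sharplyTwoArcTransitiveOn_iff.mpr hB, sharplyArcTransitiveOn_iff.mpr hA, ?_, ?_⟩
  · rw [Nat.card_eq_fintype_card, MK.card_neighborSet_eq_degree, MK_isRegularOfDegree v]
  · rw [nat_card_eq_of_existsUnique (isTwoArc_twoArcBase.smul hautB) isTwoArc_twoArcBase hB,
      card_twoArcs]
  · rw [nat_card_eq_of_existsUnique (isArc_arcBase.smul hautA) isArc_arcBase hA, card_arcs]
end

section
/- Let Λ be a finite connected 3-regular simple graph admitting a subgroup A ≤ Aut(Λ) that acts sharply transitively on the arcs of Λ, and suppose d := dim_{F_2} E_1(Λ) ≥ 2. Then the lexicographic product Γ = Λ[K̄_2] admits a subgroup G ≤ Aut(Γ) acting transitively on the arcs of Γ such that every vertex-stabiliser G_v has order 3·2^{d−1} and the local action G_v^{Γ(v)} is permutation isomorphic to A_4(6). -/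
/-- The subgroup `G` acts transitively on the arcs of `Γ`. -/
def ArcTransitiveOn {V : Type*} (Γ : SimpleGraph V) (G : Subgroup (Equiv.Perm V)) : Prop :=
  ∀ u v u' v' : V, Γ.Adj u v → Γ.Adj u' v' → ∃ g ∈ G, g u = u' ∧ g v = v'

/-- The local action of `G` at `v`: the set of permutations of the neighbourhood of `v`
induced by elements of the vertex-stabiliser of `v` in `G`. -/
def localActionSet {V : Type*} (Γ : SimpleGraph V) (G : Subgroup (Equiv.Perm V)) (v : V) :
    Set (Equiv.Perm (Γ.neighborSet v)) :=
  {p | ∃ g ∈ G, g v = v ∧ ∀ u : Γ.neighborSet v, (p u : V) = g (u : V)}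

/-- Permutation isomorphism between a set of permutations of `Ω` and a set of
permutations of `Δ`: a bijection `e : Ω ≃ Δ` conjugating the first set onto the second. -/
def PermIsomorphic {Ω Δ : Type*} (P : Set (Equiv.Perm Ω)) (Q : Set (Equiv.Perm Δ)) : Prop :=
  ∃ e : Ω ≃ Δ, ∀ q : Equiv.Perm Δ, q ∈ Q ↔ ∃ p ∈ P, ∀ ω : Ω, e (p ω) = q (e ω)

open scoped Classical in
/-- The 1-eigenspace of the adjacency matrix of `Λ` over `F₂`. -/
noncomputable def eigOne {V : Type*} [Fintype V] (Λ : SimpleGraph V) :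
    Submodule (ZMod 2) (V → ZMod 2) :=
  LinearMap.ker (Matrix.toLin' (Λ.adjMatrix (ZMod 2)) - LinearMap.id)

/-- The lexicographic product `Λ[K̄₂]`: vertex set `V(Λ) × F₂`, with `(u,i)` adjacent to
`(v,j)` iff `u` is adjacent to `v` in `Λ`. -/
def lexK2 {V : Type*} (Λ : SimpleGraph V) : SimpleGraph (V × ZMod 2) where
  Adj p q := Λ.Adj p.1 q.1
  symm := ⟨fun _ _ h => SimpleGraph.Adj.symm h⟩
  loopless := ⟨fun p h => Λ.ne_of_adj h rfl⟩

/-- The double transposition `(1 2)(3 4)` (0-indexed: `(0 1)(2 3)`). -/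
def doubleTransposition : Equiv.Perm (Fin 4) := Equiv.swap 0 1 * Equiv.swap 2 3

/-- The subgroup `⟨(1 2)(3 4)⟩` of `Alt(4)`. -/
def Halt : Subgroup (alternatingGroup (Fin 4)) :=
  Subgroup.zpowers ⟨doubleTransposition, by rw [Equiv.Perm.mem_alternatingGroup]; decide⟩

/-- `A₄(6)`: the image of `Alt(4)` in the symmetric group on the 6 left cosets of
`⟨(1 2)(3 4)⟩`, under the left multiplication action. -/
def A46 : Subgroup (Equiv.Perm (alternatingGroup (Fin 4) ⧸ Halt)) :=
  (MulAction.toPermHom (alternatingGroup (Fin 4)) (alternatingGroup (Fin 4) ⧸ Halt)).range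

/-!
`G` is the semidirect product `E₁(Λ) ⋊ A`, acting on `V × 𝔽₂` by `(v, i) ↦ (a v, i + x v)`; it
preserves `Λ[K̄₂]` because `E₁` is `A`-invariant. The stabiliser of `(v, i)` consists of the pairs
with `a v = v` and `x v = 0`: by sharp arc-transitivity there are 3 choices of `a`, and since some
`x ∈ E₁` takes the value 1 at `v` there are `2^(d-1)` choices of `x`. On `Γ(v, i) = Γ(v) × 𝔽₂` such
a pair rotates `Γ(v)` (the stabiliser `A_v` is cyclic of order 3) and adds `x` restricted to
`Γ(v)`, a pattern of even weight by the eigenvalue equation at `v`. Every even pattern occurs: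
since `Λ` is connected and `d ≥ 2`, some `x ∈ E₁` separates the ends of an edge, and
arc-transitivity moves it to any arc. The resulting group `𝔽₂² ⋊ C₃` on six points is `Alt(4)`
acting on the cosets of `⟨(1 2)(3 4)⟩`, which is checked by computation.
-/

open Equiv

lemma bijective_pow_fin_of_card_eq_prime {G : Type*} [Group G] {p : ℕ} [Fact p.Prime]
    (hG : Nat.card G = p) {g : G} (hg : g ≠ 1) :
    Function.Bijective fun m : Fin p => g ^ (m : ℕ) := by
  have : Finite G := Nat.finite_of_card_ne_zero (hG ▸ (Fact.out : p.Prime).ne_zero)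
  have hord : orderOf g = p := orderOf_eq_prime (hG ▸ pow_card_eq_one') hg
  refine Function.Injective.bijective_of_nat_card_le (fun m m' h => Fin.ext ?_) (by simp [hG])
  exact pow_injOn_Iio_orderOf (by simp [hord]) (by simp [hord]) h

lemma pow_fin_mul_pow_fin {M : Type*} [Monoid M] {p : ℕ} {g : M} (hg : g ^ p = 1) (k m : Fin p) :
    g ^ (k : ℕ) * g ^ (m : ℕ) = g ^ ((m + k : Fin p) : ℕ) := by
  rw [← pow_add, pow_eq_pow_mod _ hg, Fin.val_add, add_comm]

theorem PermIsomorphic.trans {Ω Δ Θ : Type*} {P : Set (Perm Ω)} {Q : Set (Perm Δ)}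
    {R : Set (Perm Θ)} (hPQ : PermIsomorphic P Q) (hQR : PermIsomorphic Q R) :
    PermIsomorphic P R := by
  obtain ⟨e₁, h₁⟩ := hPQ
  obtain ⟨e₂, h₂⟩ := hQR
  refine ⟨e₁.trans e₂, fun r => ⟨fun hr => ?_, ?_⟩⟩
  · obtain ⟨q, hq, hqr⟩ := (h₂ r).1 hr
    obtain ⟨p, hp, hpq⟩ := (h₁ q).1 hq
    exact ⟨p, hp, fun ω => by simp [hpq, hqr]⟩
  · rintro ⟨p, hp, hpr⟩
    refine (h₂ r).2 ⟨(e₂.trans r).trans e₂.symm, (h₁ _).2 ⟨p, hp, fun ω => ?_⟩, fun δ => by simp⟩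
    simp only [Equiv.trans_apply, Equiv.eq_symm_apply]
    exact hpr ω

/-- The set of permutations `(m, j) ↦ (m + k, j + ρ m)` of `Fin 3 × 𝔽₂` with `ρ` of even weight:
the group `𝔽₂² ⋊ C₃ ≅ Alt(4)` acting on six points. -/
def twistedRotations : Set (Perm (Fin 3 × ZMod 2)) :=
  {q | ∃ k : Fin 3, ∃ ρ : Fin 3 → ZMod 2, ∑ m, ρ m = 0 ∧ ∀ m j, q (m, j) = (m + k, j + ρ m)}

lemma prodShear_mem_twistedRotations (k : Fin 3) {ρ : Fin 3 → ZMod 2} (hρ : ∑ m, ρ m = 0) :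
    prodShear (Equiv.addRight k) (fun m => Equiv.addRight (ρ m)) ∈ twistedRotations :=
  ⟨k, ρ, hρ, fun _ _ => rfl⟩

def cycle₀₁₂ : alternatingGroup (Fin 4) :=
  ⟨swap 0 1 * swap 1 2, by rw [Perm.mem_alternatingGroup]; decide⟩

def dbl₀₂ : alternatingGroup (Fin 4) :=
  ⟨swap 0 2 * swap 1 3, by rw [Perm.mem_alternatingGroup]; decide⟩

def dbl₀₁ : alternatingGroup (Fin 4) :=
  ⟨doubleTransposition, by rw [Perm.mem_alternatingGroup]; decide⟩

lemma mem_Halt_iff (s : alternatingGroup (Fin 4)) : s ∈ Halt ↔ s = 1 ∨ s = dbl₀₁ := by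
  have hsq : dbl₀₁ ^ (2 : ℤ) = 1 := by decide
  rw [show Halt = Subgroup.zpowers dbl₀₁ from rfl, Subgroup.mem_zpowers_iff]
  constructor
  · rintro ⟨k, rfl⟩
    obtain ⟨n, rfl | rfl⟩ := Int.even_or_odd' k
    · rw [zpow_mul, hsq, one_zpow]
      exact Or.inl rfl
    · rw [zpow_add, zpow_mul, hsq, one_zpow, one_mul, zpow_one]
      exact Or.inr rfl
  · rintro (rfl | rfl)
    · exact ⟨0, rfl⟩
    · exact ⟨1, zpow_one _⟩

lemma mk_eq_mk_iff_Halt (a b : alternatingGroup (Fin 4)) :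
    (a : alternatingGroup (Fin 4) ⧸ Halt) = b ↔ a⁻¹ * b = 1 ∨ a⁻¹ * b = dbl₀₁ := by
  rw [QuotientGroup.eq, mem_Halt_iff]

/-- `⟨cycle₀₁₂⟩` is a complement of the Klein four-group `⟨dbl₀₁, dbl₀₂⟩`, so the elements
`cycle₀₁₂ ^ m * dbl₀₂ ^ j` represent the six cosets of `Halt = ⟨dbl₀₁⟩`. -/
def cosetRep (m : Fin 3) (j : ZMod 2) : alternatingGroup (Fin 4) :=
  cycle₀₁₂ ^ (m : ℕ) * dbl₀₂ ^ j.val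

lemma bijective_mk_cosetRep :
    Function.Bijective fun q : Fin 3 × ZMod 2 =>
      (cosetRep q.1 q.2 : alternatingGroup (Fin 4) ⧸ Halt) := by
  refine ⟨fun q q' h => ?_, fun c => QuotientGroup.induction_on c fun s => ?_⟩
  · rw [mk_eq_mk_iff_Halt] at h
    revert q q'
    decide
  · simp only [mk_eq_mk_iff_Halt]
    revert s
    decide

noncomputable def cosetEquiv : Fin 3 × ZMod 2 ≃ alternatingGroup (Fin 4) ⧸ Halt :=
  Equiv.ofBijective _ bijective_mk_cosetRep

lemma cosetEquiv_apply (m : Fin 3) (j : ZMod 2) : cosetEquiv (m, j) = cosetRep m j := rfl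

set_option maxRecDepth 10000 in
lemma exists_twist_smul_cosetEquiv (s : alternatingGroup (Fin 4)) :
    ∃ k : Fin 3, ∃ ρ : Fin 3 → ZMod 2, ∑ m, ρ m = 0 ∧
      ∀ m j, s • cosetEquiv (m, j) = cosetEquiv (m + k, j + ρ m) := by
  simp only [cosetEquiv_apply, MulAction.Quotient.smul_mk, smul_eq_mul, mk_eq_mk_iff_Halt]
  revert s
  decide

set_option maxRecDepth 10000 in
lemma exists_smul_cosetEquiv_twist (k : Fin 3) (ρ : Fin 3 → ZMod 2) (hρ : ∑ m, ρ m = 0) :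
    ∃ s : alternatingGroup (Fin 4),
      ∀ m j, s • cosetEquiv (m, j) = cosetEquiv (m + k, j + ρ m) := by
  simp only [cosetEquiv_apply, MulAction.Quotient.smul_mk, smul_eq_mul, mk_eq_mk_iff_Halt]
  revert k ρ
  decide

theorem permIsomorphic_twistedRotations_A46 :
    PermIsomorphic twistedRotations
      ((A46 : Subgroup _) : Set (Perm (alternatingGroup (Fin 4) ⧸ Halt))) := by
  refine ⟨cosetEquiv, fun q => ⟨?_, ?_⟩⟩
  · rintro ⟨s, rfl⟩
    obtain ⟨k, ρ, hρ, hs⟩ := exists_twist_smul_cosetEquiv s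
    exact ⟨_, prodShear_mem_twistedRotations k hρ, fun ω => (hs ω.1 ω.2).symm⟩
  · rintro ⟨p, ⟨k, ρ, hρ, hp⟩, hpq⟩
    obtain ⟨s, hs⟩ := exists_smul_cosetEquiv_twist k ρ hρ
    refine ⟨s, Equiv.ext fun c => ?_⟩
    obtain ⟨⟨m, j⟩, rfl⟩ := cosetEquiv.surjective c
    rw [← hpq, hp, ← hs]
    rfl

section LexLift

variable {V : Type*}

def lexLift (a : Perm V) (x : V → ZMod 2) : Perm (V × ZMod 2) :=
  prodShear a fun w => Equiv.addRight (x w)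

@[simp]
lemma lexLift_apply (a : Perm V) (x : V → ZMod 2) (p : V × ZMod 2) :
    lexLift a x p = (a p.1, p.2 + x p.1) := rfl

lemma lexLift_one : lexLift (1 : Perm V) 0 = 1 := by
  ext p <;> simp

lemma lexLift_mul (a b : Perm V) (x y : V → ZMod 2) :
    lexLift a x * lexLift b y = lexLift (a * b) (y + x ∘ b) := by
  ext p <;> simp [add_assoc]

lemma lexLift_inv (a : Perm V) (x : V → ZMod 2) :
    (lexLift a x)⁻¹ = lexLift a⁻¹ (x ∘ ⇑a⁻¹) := by
  rw [inv_eq_iff_mul_eq_one, lexLift_mul, mul_inv_cancel, ← lexLift_one]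
  congr 1
  ext v
  exact CharTwo.add_self_eq_zero _

lemma lexLift_injective {a b : Perm V} {x y : V → ZMod 2} (h : lexLift a x = lexLift b y) :
    a = b ∧ x = y := by
  have h' (v : V) := congrArg (· (v, 0)) h
  simp only [lexLift_apply, Prod.mk.injEq, zero_add] at h'
  exact ⟨Equiv.ext fun v => (h' v).1, funext fun v => (h' v).2⟩

lemma lexLift_apply_eq_self_iff (a : Perm V) (x : V → ZMod 2) (v : V) (i : ZMod 2) :
    lexLift a x (v, i) = (v, i) ↔ a v = v ∧ x v = 0 := by
  simp

lemma isGraphAut_lexLift {Λ : SimpleGraph V} {a : Perm V} (ha : IsGraphAut Λ a)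
    (x : V → ZMod 2) : IsGraphAut (lexK2 Λ) (lexLift a x) :=
  fun p q => ha p.1 q.1

variable (A : Subgroup (Perm V)) (E : Submodule (ZMod 2) (V → ZMod 2))
  (hE : ∀ a ∈ A, ∀ x ∈ E, x ∘ ⇑a ∈ E)

/-- The semidirect product `E ⋊ A`. -/
def lexLiftSubgroup : Subgroup (Perm (V × ZMod 2)) where
  carrier := {g | ∃ a ∈ A, ∃ x ∈ E, lexLift a x = g}
  one_mem' := ⟨1, A.one_mem, 0, E.zero_mem, lexLift_one⟩
  mul_mem' := by
    rintro _ _ ⟨a, ha, x, hx, rfl⟩ ⟨b, hb, y, hy, rfl⟩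
    exact ⟨a * b, A.mul_mem ha hb, _, E.add_mem hy (hE b hb x hx), (lexLift_mul a b x y).symm⟩
  inv_mem' := by
    rintro _ ⟨a, ha, x, hx, rfl⟩
    exact ⟨a⁻¹, A.inv_mem ha, _, hE _ (A.inv_mem ha) x hx, (lexLift_inv a x).symm⟩

variable {A E hE}

lemma lexLift_mem_lexLiftSubgroup {a : Perm V} (ha : a ∈ A) {x : V → ZMod 2} (hx : x ∈ E) :
    lexLift a x ∈ lexLiftSubgroup A E hE :=
  ⟨a, ha, x, hx, rfl⟩

lemma card_lexLiftSubgroup_inf_stabilizer (v : V) (i : ZMod 2) :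
    Nat.card ↥(lexLiftSubgroup A E hE ⊓ MulAction.stabilizer (Perm (V × ZMod 2)) (v, i)) =
      Nat.card ↥(A ⊓ MulAction.stabilizer (Perm V) v) *
        Nat.card ↥(LinearMap.ker ((LinearMap.proj v).comp E.subtype)) := by
  let Φ (ax : ↥(A ⊓ MulAction.stabilizer (Perm V) v) ×
      ↥(LinearMap.ker ((LinearMap.proj v).comp E.subtype))) :
      ↥(lexLiftSubgroup A E hE ⊓ MulAction.stabilizer (Perm (V × ZMod 2)) (v, i)) :=
    ⟨lexLift ax.1 ax.2.1, lexLift_mem_lexLiftSubgroup (Subgroup.mem_inf.1 ax.1.2).1 ax.2.1.2,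
      (lexLift_apply_eq_self_iff _ _ v i).2 ⟨(Subgroup.mem_inf.1 ax.1.2).2, ax.2.2⟩⟩
  refine (Nat.card_congr (Equiv.ofBijective Φ ⟨?_, ?_⟩)).symm.trans (Nat.card_prod _ _)
  · rintro ⟨a, x⟩ ⟨b, y⟩ h
    obtain ⟨hab, hxy⟩ := lexLift_injective (Subtype.ext_iff.1 h)
    exact Prod.ext (Subtype.ext hab) (Subtype.ext (Subtype.ext hxy))
  · rintro ⟨_, ⟨a, ha, x, hx, rfl⟩, hfix⟩
    obtain ⟨hav, hxv⟩ := (lexLift_apply_eq_self_iff a x v i).1 hfix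
    exact ⟨(⟨a, ha, hav⟩, ⟨⟨x, hx⟩, hxv⟩), rfl⟩

end LexLift

section ArcTransitive

variable {V : Type*} {Λ : SimpleGraph V} {A : Subgroup (Perm V)}

lemma SharplyArcTransitiveOn.arcTransitiveOn (hA : SharplyArcTransitiveOn Λ A) :
    ArcTransitiveOn Λ A := fun u v u' v' huv hu'v' =>
  let ⟨g, hg, _⟩ := hA u v u' v' huv hu'v'
  ⟨g, g.2, hg⟩

lemma SharplyArcTransitiveOn.eq_of_apply_eq_apply (hA : SharplyArcTransitiveOn Λ A) {v w : V}
    (hvw : Λ.Adj v w) {a b : Perm V} (ha : a ∈ A) (hb : b ∈ A) (hv : a v = b v)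
    (hw : a w = b w) : a = b := by
  obtain ⟨_, _, huniq⟩ := hA v w v w hvw hvw
  have hfix : ∀ c : A, (c : Perm V) v = v → (c : Perm V) w = w → c = 1 := fun c hcv hcw =>
    (huniq c ⟨hcv, hcw⟩).trans (huniq 1 ⟨rfl, rfl⟩).symm
  have := hfix ⟨b⁻¹ * a, A.mul_mem (A.inv_mem hb) ha⟩ (by simp [hv]) (by simp [hw])
  exact (inv_mul_eq_one.1 (congrArg Subtype.val this)).symm

lemma IsGraphAut.apply_mem_neighborSet_iff {Γ : SimpleGraph V} {g : Perm V} (hg : IsGraphAut Γ g)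
    {v : V} (hv : g v = v) (w : V) : g w ∈ Γ.neighborSet v ↔ w ∈ Γ.neighborSet v := by
  simpa [hv] using hg v w

noncomputable def SharplyArcTransitiveOn.stabilizerEquiv (hA : SharplyArcTransitiveOn Λ A)
    (hAaut : ∀ g ∈ A, IsGraphAut Λ g) {v w : V} (hvw : Λ.Adj v w) :
    ↥(A ⊓ MulAction.stabilizer (Perm V) v) ≃ Λ.neighborSet v :=
  Equiv.ofBijective
    (fun a => ⟨(a : Perm V) w, by
      obtain ⟨ha, hav⟩ := Subgroup.mem_inf.1 a.2
      exact ((hAaut a ha).apply_mem_neighborSet_iff hav w).2 hvw⟩)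
    (by
      refine ⟨fun a b hab => ?_, fun u => ?_⟩
      · obtain ⟨ha, hav⟩ := Subgroup.mem_inf.1 a.2
        obtain ⟨hb, hbv⟩ := Subgroup.mem_inf.1 b.2
        exact Subtype.ext <|
          hA.eq_of_apply_eq_apply hvw ha hb (hav.trans hbv.symm) (Subtype.ext_iff.1 hab)
      · obtain ⟨g, hg, -⟩ := hA v w v u hvw u.2
        exact ⟨⟨g, g.2, hg.1⟩, Subtype.ext hg.2⟩)

lemma SharplyArcTransitiveOn.stabilizerEquiv_apply (hA : SharplyArcTransitiveOn Λ A)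
    (hAaut : ∀ g ∈ A, IsGraphAut Λ g) {v w : V} (hvw : Λ.Adj v w)
    (a : ↥(A ⊓ MulAction.stabilizer (Perm V) v)) :
    (hA.stabilizerEquiv hAaut hvw a : V) = (a : Perm V) w := rfl

lemma SharplyArcTransitiveOn.exists_rotation (hA : SharplyArcTransitiveOn Λ A)
    (hAaut : ∀ g ∈ A, IsGraphAut Λ g) {v : V} (hv : Nat.card (Λ.neighborSet v) = 3) :
    ∃ σ ∈ A, σ v = v ∧ ∃ f : Fin 3 ≃ Λ.neighborSet v,
      (∀ k m : Fin 3, (σ ^ (k : ℕ)) (f m) = f (m + k)) ∧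
      ∀ a ∈ A, a v = v → ∃ k : Fin 3, a = σ ^ (k : ℕ) := by
  have : Finite (Λ.neighborSet v) := Nat.finite_of_card_ne_zero (by omega)
  have : Nontrivial (Λ.neighborSet v) := Finite.one_lt_card_iff_nontrivial.1 (by omega)
  obtain ⟨w₁, w₂, hw⟩ := exists_pair_ne (Λ.neighborSet v)
  let e := hA.stabilizerEquiv hAaut w₁.2
  have he (a : ↥(A ⊓ MulAction.stabilizer (Perm V) v)) : (e a : V) = (a : Perm V) w₁ := rfl
  have hS : Nat.card ↥(A ⊓ MulAction.stabilizer (Perm V) v) = 3 := (Nat.card_congr e).trans hv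
  obtain ⟨σ, hσw⟩ := e.surjective w₂
  have hσ : σ ≠ 1 := by
    rintro rfl
    exact hw (Subtype.ext (by rw [← hσw, he]; rfl))
  have hpow := bijective_pow_fin_of_card_eq_prime hS hσ
  have hσ3 : σ ^ 3 = 1 := hS ▸ pow_card_eq_one'
  refine ⟨σ, (Subgroup.mem_inf.1 σ.2).1, (Subgroup.mem_inf.1 σ.2).2,
    (Equiv.ofBijective _ hpow).trans e, fun k m => ?_, fun a ha hav => ?_⟩
  · simp only [Equiv.trans_apply, Equiv.ofBijective_apply, he, ← pow_fin_mul_pow_fin hσ3 k m,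
      Subgroup.coe_mul, Subgroup.coe_pow, Perm.mul_apply]
  · obtain ⟨k, hk⟩ := hpow.2 ⟨a, ha, hav⟩
    exact ⟨k, (congrArg Subtype.val hk).symm⟩

end ArcTransitive

section EigOne

variable {V : Type*} [Fintype V] {Λ : SimpleGraph V}

open scoped Classical in
lemma mem_eigOne_iff (x : V → ZMod 2) :
    x ∈ eigOne Λ ↔ ∀ v, ∑ u ∈ Λ.neighborFinset v, x u = x v := by
  simp only [eigOne, LinearMap.mem_ker, LinearMap.sub_apply, LinearMap.id_apply, sub_eq_zero,
    Matrix.toLin'_apply, funext_iff, SimpleGraph.adjMatrix_mulVec_apply]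

lemma sum_comp_neighborSetEquiv_of_mem_eigOne {ι : Type*} [Fintype ι] {x : V → ZMod 2}
    (hx : x ∈ eigOne Λ) {v : V} (f : ι ≃ Λ.neighborSet v) : ∑ m, x (f m) = x v := by
  classical
  rw [← (mem_eigOne_iff x).1 hx v, f.sum_comp (fun u => x u), Finset.sum_set_coe,
    SimpleGraph.neighborFinset_def]

lemma comp_mem_eigOne {σ : Perm V} (hσ : IsGraphAut Λ σ) {x : V → ZMod 2}
    (hx : x ∈ eigOne Λ) : x ∘ σ ∈ eigOne Λ := by
  classical
  rw [mem_eigOne_iff] at hx ⊢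
  intro v
  change ∑ u ∈ Λ.neighborFinset v, x (σ u) = x (σ v)
  rw [← hx (σ v)]
  exact Finset.sum_nbij' σ σ.symm (fun u hu => by simpa [hσ v u] using hu)
    (fun u hu => by simpa [← hσ v (σ.symm u)] using hu) (fun u _ => σ.symm_apply_apply u)
    (fun u _ => σ.apply_symm_apply u) (fun _ _ => rfl)

end EigOne

lemma finrank_le_one_of_forall_adj_eq {V K : Type*} [Field K] {Λ : SimpleGraph V}
    (hconn : Λ.Connected) (W : Submodule K (V → K))
    (hW : ∀ x ∈ W, ∀ u w, Λ.Adj u w → x u = x w) : Module.finrank K W ≤ 1 := by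
  obtain ⟨v₀⟩ := hconn.nonempty
  have hconst (x) (hx : x ∈ W) (u : V) : x u = x v₀ := by
    obtain ⟨p⟩ := hconn.preconnected u v₀
    induction p with
    | nil => rfl
    | cons hadj _ ih => exact (hW x hx _ _ hadj).trans ih
  have hle : W ≤ K ∙ (fun _ => 1 : V → K) := fun x hx =>
    Submodule.mem_span_singleton.2 ⟨x v₀, funext fun u => by simp [hconst x hx u]⟩
  calc Module.finrank K W ≤ Module.finrank K (K ∙ (fun _ => 1 : V → K)) :=
        Submodule.finrank_mono hle
    _ ≤ 1 := (finrank_span_le_card _).trans (by simp)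

lemma exists_mem_apply_eq_of_arcTransitiveOn {V : Type*} {Λ : SimpleGraph V}
    {A : Subgroup (Perm V)} {E : Submodule (ZMod 2) (V → ZMod 2)} (hA : ArcTransitiveOn Λ A)
    (hE : ∀ a ∈ A, ∀ x ∈ E, x ∘ ⇑a ∈ E) (hsep : ∃ x ∈ E, ∃ u w, Λ.Adj u w ∧ x u ≠ x w) :
    ∀ u w, Λ.Adj u w → ∀ ε η : ZMod 2, ∃ x ∈ E, x u = ε ∧ x w = η := by
  have hone_zero : ∀ u w, Λ.Adj u w → ∃ x ∈ E, x u = 1 ∧ x w = 0 := by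
    obtain ⟨x, hx, u₀, w₀, h₀, hne⟩ := hsep
    have hcases : ∀ a b : ZMod 2, a ≠ b → a = 1 ∧ b = 0 ∨ b = 1 ∧ a = 0 := by decide
    obtain ⟨u₁, w₁, h₁, hxu, hxw⟩ : ∃ u₁ w₁, Λ.Adj u₁ w₁ ∧ x u₁ = 1 ∧ x w₁ = 0 := by
      rcases hcases _ _ hne with h | h
      · exact ⟨u₀, w₀, h₀, h⟩
      · exact ⟨w₀, u₀, h₀.symm, h⟩
    intro u w huw
    obtain ⟨g, hg, hgu, hgw⟩ := hA u w u₁ w₁ huw h₁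
    exact ⟨x ∘ g, hE g hg x hx, by simp [hgu, hxu], by simp [hgw, hxw]⟩
  intro u w huw ε η
  obtain ⟨x, hx, hxu, hxw⟩ := hone_zero u w huw
  obtain ⟨y, hy, hyw, hyu⟩ := hone_zero w u huw.symm
  exact ⟨ε • x + η • y, E.add_mem (E.smul_mem ε hx) (E.smul_mem η hy), by simp [*], by simp [*]⟩

lemma exists_mem_eigOne_apply_ne {V : Type*} [Fintype V] {Λ : SimpleGraph V} (hconn : Λ.Connected)
    (hd : 2 ≤ Module.finrank (ZMod 2) (eigOne Λ)) :
    ∃ x ∈ eigOne Λ, ∃ u w, Λ.Adj u w ∧ x u ≠ x w := by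
  by_contra! h
  have := finrank_le_one_of_forall_adj_eq hconn _ h
  omega

lemma arcTransitiveOn_lexLiftSubgroup {V : Type*} {Λ : SimpleGraph V} {A : Subgroup (Perm V)}
    {E : Submodule (ZMod 2) (V → ZMod 2)} {hE : ∀ a ∈ A, ∀ x ∈ E, x ∘ ⇑a ∈ E}
    (hA : ArcTransitiveOn Λ A)
    (hsep : ∀ u w, Λ.Adj u w → ∀ ε η : ZMod 2, ∃ x ∈ E, x u = ε ∧ x w = η) :
    ArcTransitiveOn (lexK2 Λ) (lexLiftSubgroup A E hE) := by
  rintro ⟨u, i⟩ ⟨w, j⟩ ⟨u', i'⟩ ⟨w', j'⟩ huw hu'w'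
  obtain ⟨a, ha, hau, haw⟩ := hA u w u' w' huw hu'w'
  obtain ⟨x, hx, hxu, hxw⟩ := hsep u w huw (i' - i) (j' - j)
  exact ⟨lexLift a x, lexLift_mem_lexLiftSubgroup ha hx, by simp [hau, hxu], by simp [haw, hxw]⟩

lemma card_ker_eq_pow_of_surjective {K M : Type*} [Field K] [Fintype K] [AddCommGroup M]
    [Module K M] [FiniteDimensional K M] {φ : M →ₗ[K] K} (hφ : Function.Surjective φ) :
    Nat.card (LinearMap.ker φ) = Fintype.card K ^ (Module.finrank K M - 1) := by
  have hrank := φ.finrank_range_add_finrank_ker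
  rw [LinearMap.range_eq_top.2 hφ, finrank_top, Module.finrank_self] at hrank
  rw [Module.natCard_eq_pow_finrank (K := K), Nat.card_eq_fintype_card]
  congr 1
  omega

section LocalAction

variable {V : Type*} {Λ : SimpleGraph V}

def lexK2NeighborSetEquiv {ι : Type*} {v : V} (f : ι ≃ Λ.neighborSet v) (i : ZMod 2) :
    (lexK2 Λ).neighborSet (v, i) ≃ ι × ZMod 2 where
  toFun ω := (f.symm ⟨ω.1.1, ω.2⟩, ω.1.2)
  invFun q := ⟨((f q.1 : V), q.2), (f q.1).2⟩
  left_inv ω := by simp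
  right_inv q := by
    change (f.symm (f q.1), q.2) = q
    simp

lemma lexK2NeighborSetEquiv_conj_iff {ι : Type*} {v : V} (f : ι ≃ Λ.neighborSet v) (i : ZMod 2)
    (p : Perm ((lexK2 Λ).neighborSet (v, i))) (q : Perm (ι × ZMod 2)) :
    (∀ ω, lexK2NeighborSetEquiv f i (p ω) = q (lexK2NeighborSetEquiv f i ω)) ↔
      ∀ m j, (p ((lexK2NeighborSetEquiv f i).symm (m, j)) : V × ZMod 2) =
        ((f (q (m, j)).1 : V), (q (m, j)).2) := by
  rw [← (lexK2NeighborSetEquiv f i).symm.forall_congr_right, Prod.forall]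
  refine forall₂_congr fun m j => ?_
  rw [Equiv.apply_symm_apply, ← Equiv.eq_symm_apply, Subtype.ext_iff]
  rfl

lemma mem_localActionSet_lexLiftSubgroup_iff {A : Subgroup (Perm V)}
    {E : Submodule (ZMod 2) (V → ZMod 2)} {hE : ∀ a ∈ A, ∀ x ∈ E, x ∘ ⇑a ∈ E} {v : V}
    {i : ZMod 2} (p : Perm ((lexK2 Λ).neighborSet (v, i))) :
    p ∈ localActionSet (lexK2 Λ) (lexLiftSubgroup A E hE) (v, i) ↔
      ∃ a ∈ A, a v = v ∧ ∃ x ∈ E, x v = 0 ∧ ∀ ω, (p ω : V × ZMod 2) = lexLift a x ω := by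
  constructor
  · rintro ⟨_, ⟨a, ha, x, hx, rfl⟩, hfix, hp⟩
    obtain ⟨hav, hxv⟩ := (lexLift_apply_eq_self_iff a x v i).1 hfix
    exact ⟨a, ha, hav, x, hx, hxv, hp⟩
  · rintro ⟨a, ha, hav, x, hx, hxv, hp⟩
    exact ⟨_, lexLift_mem_lexLiftSubgroup ha hx,
      (lexLift_apply_eq_self_iff a x v i).2 ⟨hav, hxv⟩, hp⟩

lemma exists_eq_mul_add_mul_rotate : ∀ ρ τ : Fin 3 → ZMod 2, ∑ m, ρ m = 0 → ρ 0 = 1 →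
    ∑ m, τ m = 0 → ∃ c₁ c₂ : ZMod 2, ∀ m, τ m = c₁ * ρ m + c₂ * ρ (m + 1) := by
  decide

lemma exists_mem_eigOne_comp_eq [Fintype V] {v : V} {σ : Perm V} (hσ : IsGraphAut Λ σ)
    (hσv : σ v = v) (f : Fin 3 ≃ Λ.neighborSet v) (hf : ∀ m, σ (f m) = f (m + 1))
    (hx₀ : ∃ x ∈ eigOne Λ, x v = 0 ∧ x (f 0) = 1) {τ : Fin 3 → ZMod 2} (hτ : ∑ m, τ m = 0) :
    ∃ x ∈ eigOne Λ, x v = 0 ∧ ∀ m, x (f m) = τ m := by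
  obtain ⟨x, hx, hxv, hxf⟩ := hx₀
  obtain ⟨c₁, c₂, hc⟩ := exists_eq_mul_add_mul_rotate (fun m => x (f m)) τ
    ((sum_comp_neighborSetEquiv_of_mem_eigOne hx f).trans hxv) hxf hτ
  refine ⟨c₁ • x + c₂ • (x ∘ σ), (eigOne Λ).add_mem ((eigOne Λ).smul_mem c₁ hx)
    ((eigOne Λ).smul_mem c₂ (comp_mem_eigOne hσ hx)), by simp [hσv, hxv], fun m => ?_⟩
  simp [hf, hc]

theorem permIsomorphic_localActionSet_twistedRotations [Fintype V] {A : Subgroup (Perm V)}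
    (hAaut : ∀ g ∈ A, IsGraphAut Λ g) (hE : ∀ a ∈ A, ∀ x ∈ eigOne Λ, x ∘ ⇑a ∈ eigOne Λ)
    {v : V} {σ : Perm V} (hσA : σ ∈ A) (hσv : σ v = v) (f : Fin 3 ≃ Λ.neighborSet v)
    (hf : ∀ k m : Fin 3, (σ ^ (k : ℕ)) (f m) = f (m + k))
    (hS : ∀ a ∈ A, a v = v → ∃ k : Fin 3, a = σ ^ (k : ℕ))
    (hx₀ : ∃ x ∈ eigOne Λ, x v = 0 ∧ x (f 0) = 1) (i : ZMod 2) :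
    PermIsomorphic (localActionSet (lexK2 Λ) (lexLiftSubgroup A (eigOne Λ) hE) (v, i))
      twistedRotations := by
  refine ⟨lexK2NeighborSetEquiv f i, fun q => ?_⟩
  simp only [lexK2NeighborSetEquiv_conj_iff]
  constructor
  · rintro ⟨k, ρ, hρ, hq⟩
    obtain ⟨x, hx, hxv, hxf⟩ := exists_mem_eigOne_comp_eq (hAaut σ hσA) hσv f
      (fun m => by simpa using hf 1 m) hx₀ hρ
    have hσk : σ ^ (k : ℕ) ∈ A := A.pow_mem hσA _
    have hσkv : (σ ^ (k : ℕ)) v = v := by simp [Perm.pow_apply_eq_self_of_apply_eq_self hσv]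
    have hpres (ω) := (isGraphAut_lexLift (hAaut _ hσk) x).apply_mem_neighborSet_iff
      ((lexLift_apply_eq_self_iff _ x v i).2 ⟨hσkv, hxv⟩) ω
    refine ⟨(lexLift (σ ^ (k : ℕ)) x).subtypePerm hpres,
      (mem_localActionSet_lexLiftSubgroup_iff _).2 ⟨_, hσk, hσkv, x, hx, hxv, fun _ => rfl⟩,
      fun m j => ?_⟩
    simp [lexK2NeighborSetEquiv, hq, hf, hxf]
  · rintro ⟨p, hp, hpq⟩
    obtain ⟨a, ha, hav, x, hx, hxv, hpx⟩ := (mem_localActionSet_lexLiftSubgroup_iff p).1 hp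
    obtain ⟨k, rfl⟩ := hS a ha hav
    refine ⟨k, fun m => x (f m), (sum_comp_neighborSetEquiv_of_mem_eigOne hx f).trans hxv,
      fun m j => ?_⟩
    have h := hpq m j
    simp only [hpx, lexK2NeighborSetEquiv, Equiv.coe_fn_symm_mk, lexLift_apply, hf,
      Prod.mk.injEq] at h
    exact Prod.ext (f.injective (Subtype.ext h.1.symm)) h.2.symm

end LocalAction

/-- If `Λ` is a finite connected cubic graph with a sharply arc-transitive group of
automorphisms `A` and `d := dim E₁(Λ) ≥ 2`, then `Λ[K̄₂]` has an arc-transitive group of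
automorphisms `G` with vertex-stabilisers of order `3·2^(d-1)` and local action `A₄(6)`. -/
theorem statement11 {V : Type*} [Fintype V] (Λ : SimpleGraph V) (hconn : Λ.Connected)
    (hreg : ∀ v : V, Nat.card (Λ.neighborSet v) = 3)
    (A : Subgroup (Equiv.Perm V)) (hAaut : ∀ g ∈ A, IsGraphAut Λ g)
    (hAt : SharplyArcTransitiveOn Λ A)
    (hd : 2 ≤ Module.finrank (ZMod 2) (eigOne Λ)) :
    ∃ G : Subgroup (Equiv.Perm (V × ZMod 2)),
      (∀ g ∈ G, IsGraphAut (lexK2 Λ) g) ∧ ArcTransitiveOn (lexK2 Λ) G ∧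
      (∀ v : V × ZMod 2,
        Nat.card ↥(G ⊓ MulAction.stabilizer (Equiv.Perm (V × ZMod 2)) v) =
          3 * 2 ^ (Module.finrank (ZMod 2) (eigOne Λ) - 1)) ∧
      (∀ v : V × ZMod 2, PermIsomorphic (localActionSet (lexK2 Λ) G v)
        ((A46 : Subgroup _) : Set (Equiv.Perm (alternatingGroup (Fin 4) ⧸ Halt)))) := by
  have hE : ∀ a ∈ A, ∀ x ∈ eigOne Λ, x ∘ ⇑a ∈ eigOne Λ := fun a ha _ hx =>
    comp_mem_eigOne (hAaut a ha) hx
  have hsep := exists_mem_apply_eq_of_arcTransitiveOn hAt.arcTransitiveOn hE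
    (exists_mem_eigOne_apply_ne hconn hd)
  refine ⟨lexLiftSubgroup A (eigOne Λ) hE, ?_,
    arcTransitiveOn_lexLiftSubgroup hAt.arcTransitiveOn hsep, fun ⟨v, i⟩ => ?_, fun ⟨v, i⟩ => ?_⟩
  · rintro _ ⟨a, ha, x, -, rfl⟩
    exact isGraphAut_lexLift (hAaut a ha) x
  · obtain ⟨⟨w, hvw⟩⟩ : Nonempty (Λ.neighborSet v) :=
      (Nat.card_pos_iff.1 (by rw [hreg v]; norm_num)).1
    obtain ⟨x, hx, hxv, -⟩ := hsep v w hvw 1 0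
    rw [card_lexLiftSubgroup_inf_stabilizer, Nat.card_congr (hAt.stabilizerEquiv hAaut hvw),
      hreg v, card_ker_eq_pow_of_surjective (fun c => ⟨c • ⟨x, hx⟩, by simp [hxv]⟩), ZMod.card]
  · obtain ⟨σ, hσA, hσv, f, hf, hS⟩ := hAt.exists_rotation hAaut (hreg v)
    obtain ⟨x, hx, hxv, hxf⟩ := hsep v (f 0) (f 0).2 0 1
    exact (permIsomorphic_localActionSet_twistedRotations hAaut hE hσA hσv f hf hS
      ⟨x, hx, hxv, hxf⟩ i).trans permIsomorphic_twistedRotations_A46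
end
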